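/- Let G be a connected graph of order n ≥ 2. Then F_c(G) = n − 1 if and only if G is a complete graph K_n with n ≥ 2, or a star K_{1,n−1} with n ≥ 4. -/

import Mathlib

/-!
Removing a non-cut vertex `v` of `G` leaves a connected forcing set of size `n - 1`: any neighbour
of `v` forces it. Two uncoloured twins (vertices with the same neighbours apart from each other)
can never be forced, and in `K_n`, and in `K_{1,n-1}` for `n ≥ 4`, every connected set of size at
most `n - 2` misses two twins. In every other connected graph there are `u ≠ w` with `G - {u, w}`
connected and a vertex `v` adjacent to `u` but not to `w`; then `{u, w}ᶜ` is a connected forcing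
set, since `v` forces `u` and afterwards any neighbour of `w` forces `w`.
-/

open SimpleGraph

variable {V : Type*}

/-- One step of the (zero) forcing process: a colored vertex with exactly one
uncolored neighbor forces that neighbor to become colored. -/
def zfStep (G : SimpleGraph V) (S : Set V) : Set V :=
  S ∪ {w | ∃ v ∈ S, G.neighborSet v \ S = {w}}

/-- `S` is a forcing set if iterating the forcing process colors all vertices. -/
def IsForcingSet (G : SimpleGraph V) (S : Set V) : Prop :=
  ∃ n : ℕ, (zfStep G)^[n] S = Set.univ

/-- A connected forcing set: a forcing set inducing a connected subgraph. -/
def IsConnForcingSet (G : SimpleGraph V) (S : Set V) : Prop :=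
  IsForcingSet G S ∧ (G.induce S).Connected

/-- The forcing number `F(G)`. -/
noncomputable def forcingNumber (G : SimpleGraph V) : ℕ :=
  sInf (Set.ncard '' {S : Set V | IsForcingSet G S})

/-- The connected forcing number `F_c(G)`. -/
noncomputable def connForcingNumber (G : SimpleGraph V) : ℕ :=
  sInf (Set.ncard '' {S : Set V | IsConnForcingSet G S})

/-- The star `K_{1,n-1}` on `n` vertices: vertex `0` is adjacent to all others. -/
def starGraph (n : ℕ) : SimpleGraph (Fin n) :=
  SimpleGraph.fromRel (fun v _ => (v : ℕ) = 0)

section Forcing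

variable {G : SimpleGraph V} {S T : Set V} {a b u v w y : V}

lemma subset_zfStep (G : SimpleGraph V) (S : Set V) : S ⊆ zfStep G S :=
  Set.subset_union_left

lemma zfStep_mono (G : SimpleGraph V) : Monotone (zfStep G) := by
  rintro S T hST x (hx | ⟨v, hv, hvx⟩)
  · exact Or.inl (hST hx)
  by_cases hxT : x ∈ T
  · exact Or.inl hxT
  refine Or.inr ⟨v, hST hv, subset_antisymm ?_ ?_⟩
  · exact hvx ▸ Set.sdiff_subset_sdiff_right hST
  · exact Set.singleton_subset_iff.mpr ⟨(hvx.symm ▸ rfl : x ∈ G.neighborSet v \ S).1, hxT⟩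

lemma IsForcingSet.mono (hS : IsForcingSet G S) (hST : S ⊆ T) : IsForcingSet G T := by
  obtain ⟨k, hk⟩ := hS
  exact ⟨k, Set.eq_univ_of_univ_subset (hk ▸ (zfStep_mono G).iterate k hST)⟩

lemma IsForcingSet.of_zfStep (h : IsForcingSet G (zfStep G S)) : IsForcingSet G S := by
  obtain ⟨k, hk⟩ := h
  exact ⟨k + 1, by rwa [Function.iterate_succ_apply]⟩

lemma zfStep_compl_singleton_of_adj (h : G.Adj y w) : zfStep G {w}ᶜ = Set.univ := by
  refine Set.eq_univ_of_forall fun x => ?_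
  by_cases hx : x = w
  · subst hx
    refine Or.inr ⟨y, G.ne_of_adj h, ?_⟩
    ext z
    simp only [Set.mem_sdiff, mem_neighborSet, Set.mem_compl_iff, Set.mem_singleton_iff, not_not]
    exact ⟨And.right, fun hz => ⟨hz ▸ h, hz⟩⟩
  · exact Or.inl hx

lemma isForcingSet_compl_singleton_of_adj (h : G.Adj y w) : IsForcingSet G {w}ᶜ :=
  ⟨1, zfStep_compl_singleton_of_adj h⟩

lemma isForcingSet_compl_pair (hvu : G.Adj v u) (hvw : ¬G.Adj v w) (hv : v ≠ w)
    (hyw : G.Adj y w) : IsForcingSet G {u, w}ᶜ := by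
  have hu : u ∈ zfStep G {u, w}ᶜ := by
    refine Or.inr ⟨v, by simp [G.ne_of_adj hvu, hv], ?_⟩
    ext z
    simp only [Set.mem_sdiff, mem_neighborSet, Set.mem_compl_iff, Set.mem_insert_iff,
      Set.mem_singleton_iff, not_or, not_and_or, not_not]
    constructor
    · rintro ⟨hz, rfl | rfl⟩
      · rfl
      · exact absurd hz hvw
    · rintro rfl
      exact ⟨hvu, Or.inl rfl⟩
  refine IsForcingSet.of_zfStep ((isForcingSet_compl_singleton_of_adj hyw).mono fun x hx => ?_)
  by_cases hxu : x = u
  · exact hxu ▸ hu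
  · exact subset_zfStep G _ (by simp_all)

lemma notMem_zfStep_of_twins (hab : a ≠ b)
    (htwin : ∀ v, v ≠ a → v ≠ b → (G.Adj v a ↔ G.Adj v b)) (ha : a ∉ S) (hb : b ∉ S) :
    a ∉ zfStep G S := by
  rintro (ha' | ⟨v, hv, hva⟩)
  · exact ha ha'
  have hadj : G.Adj v a := (hva.symm ▸ rfl : a ∈ G.neighborSet v \ S).1
  have hb' : b ∈ G.neighborSet v \ S :=
    ⟨(htwin v (fun h => ha (h ▸ hv)) (fun h => hb (h ▸ hv))).mp hadj, hb⟩
  rw [hva] at hb'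
  exact hab hb'.symm

lemma IsForcingSet.mem_or_mem_of_twins (hS : IsForcingSet G S) (hab : a ≠ b)
    (htwin : ∀ v, v ≠ a → v ≠ b → (G.Adj v a ↔ G.Adj v b)) : a ∈ S ∨ b ∈ S := by
  by_contra! h
  have huncolored : ∀ k, a ∉ (zfStep G)^[k] S ∧ b ∉ (zfStep G)^[k] S := by
    intro k
    induction k with
    | zero => exact h
    | succ k ih =>
      rw [Function.iterate_succ_apply']
      exact ⟨notMem_zfStep_of_twins hab htwin ih.1 ih.2,
        notMem_zfStep_of_twins hab.symm (fun v hb ha => (htwin v ha hb).symm) ih.2 ih.1⟩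
  obtain ⟨k, hk⟩ := hS
  exact (huncolored k).1 (hk ▸ Set.mem_univ a)

end Forcing

section ConnForcingNumber

variable {G : SimpleGraph V} {S : Set V}

lemma isConnForcingSet_univ (hG : G.Connected) : IsConnForcingSet G Set.univ :=
  ⟨⟨0, rfl⟩, (induceUnivIso G).connected_iff.mpr hG⟩

lemma connForcingNumber_le (hS : IsConnForcingSet G S) : connForcingNumber G ≤ S.ncard :=
  Nat.sInf_le ⟨S, hS, rfl⟩

lemma subsingleton_of_preconnected_induce (hS : (G.induce S).Preconnected)
    (h : ∀ x ∈ S, ∀ y ∈ S, ¬G.Adj x y) : S.Subsingleton := by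
  intro x hx y hy
  have hbot : G.induce S = ⊥ := by
    ext ⟨x, hx⟩ ⟨y, hy⟩
    simpa using h x hx y hy
  have hreach := hS ⟨x, hx⟩ ⟨y, hy⟩
  rw [hbot, reachable_bot] at hreach
  exact congrArg Subtype.val hreach

variable [Fintype V]

lemma connForcingNumber_le_card_sub_one [Nontrivial V] (hG : G.Connected) :
    connForcingNumber G ≤ Fintype.card V - 1 := by
  obtain ⟨v, hv⟩ := hG.exists_connected_induce_compl_singleton_of_finite_nontrivial
  obtain ⟨y, hy⟩ := hG.preconnected.exists_adj_of_nontrivial v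
  calc connForcingNumber G ≤ ({v}ᶜ : Set V).ncard :=
        connForcingNumber_le ⟨isForcingSet_compl_singleton_of_adj hy.symm, hv⟩
    _ = Fintype.card V - 1 := by
        rw [Set.ncard_compl, Set.ncard_singleton, Nat.card_eq_fintype_card]

lemma connForcingNumber_eq_card_sub_one [Nontrivial V] (hG : G.Connected)
    (h : ∀ S, IsConnForcingSet G S → Sᶜ.Subsingleton) :
    connForcingNumber G = Fintype.card V - 1 := by
  refine (connForcingNumber_le_card_sub_one hG).antisymm
    (le_csInf ⟨_, Set.univ, isConnForcingSet_univ hG, rfl⟩ ?_)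
  rintro _ ⟨S, hS, rfl⟩
  have hSc := Set.ncard_le_one_iff_subsingleton.mpr (h S hS)
  rw [Set.ncard_compl, Nat.card_eq_fintype_card] at hSc
  omega

lemma connForcingNumber_top [Nontrivial V] :
    connForcingNumber (⊤ : SimpleGraph V) = Fintype.card V - 1 :=
  connForcingNumber_eq_card_sub_one connected_top fun S hS a ha b hb => by
    by_contra hab
    have := hS.1.mem_or_mem_of_twins hab fun v hva hvb => by simp [hva, hvb]
    tauto

/-- The leaves are pairwise twins, so a forcing set misses at most one of them; and a connected
set avoiding the centre is a single vertex. -/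
lemma IsConnForcingSet.compl_subsingleton_of_starGraph {c : V} (h4 : 4 ≤ Fintype.card V)
    (hS : IsConnForcingSet (SimpleGraph.starGraph c) S) : Sᶜ.Subsingleton := by
  have hleaves : (Sᶜ \ {c}).Subsingleton := by
    rintro a ⟨ha, hac⟩ b ⟨hb, hbc⟩
    by_contra hab
    have := hS.1.mem_or_mem_of_twins hab fun v hva hvb => by simp_all [eq_comm]
    tauto
  have hc : c ∈ S := by
    by_contra hc
    have hS1 := Set.ncard_le_one_iff_subsingleton.mpr <|
      subsingleton_of_preconnected_induce hS.2.preconnected fun x hx y hy hxy => by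
        rcases (starGraph_adj.mp hxy).2 with rfl | rfl <;> contradiction
    have hSc := Set.pred_ncard_le_ncard_sdiff_singleton Sᶜ c
    have hleaves1 := Set.ncard_le_one_iff_subsingleton.mpr hleaves
    rw [Set.ncard_compl, Nat.card_eq_fintype_card] at hSc
    omega
  simpa [Set.sdiff_singleton_eq_self (Set.notMem_compl_iff.mpr hc)] using hleaves

lemma connForcingNumber_starGraph {c : V} (h4 : 4 ≤ Fintype.card V) :
    connForcingNumber (SimpleGraph.starGraph c) = Fintype.card V - 1 :=
  have : Nontrivial V := Fintype.one_lt_card_iff_nontrivial.mp (by omega)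
  connForcingNumber_eq_card_sub_one (connected_starGraph c) fun _ hS =>
    hS.compl_subsingleton_of_starGraph h4

end ConnForcingNumber

namespace SimpleGraph

variable {G : SimpleGraph V} {c u v w x : V}

lemma connected_induce_image_of_connected_induce_induce {s : Set V} {t : Set s}
    (h : ((G.induce s).induce t).Connected) : (G.induce (Subtype.val '' t)).Connected := by
  let f := (Embedding.induce s).comp (Embedding.induce t : (G.induce s).induce t ↪g _)
  have hf : Set.range f = Subtype.val '' t := by
    ext x
    constructor
    · rintro ⟨y, rfl⟩
      exact ⟨y.1, y.2, rfl⟩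
    · rintro ⟨y, hy, rfl⟩
      exact ⟨⟨y, hy⟩, rfl⟩
  exact hf ▸ f.isoInduceRange.connected_iff.mp h

/-- A shortest walk from `x` to any other vertex cannot pass through a farthest vertex `u`. -/
lemma Connected.connected_induce_compl_singleton_of_forall_dist_le (hG : G.Connected)
    (hu : ∀ y, G.dist x y ≤ G.dist x u) (hxu : x ≠ u) : (G.induce {u}ᶜ).Connected := by
  classical
  rw [connected_iff_exists_forall_reachable]
  refine ⟨⟨x, hxu⟩, fun ⟨y, hy⟩ => ?_⟩
  obtain ⟨p, hp⟩ := (hG x y).exists_walk_length_eq_dist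
  have hsupp : ∀ z ∈ p.support, z ∈ ({u}ᶜ : Set V) := by
    rintro z hz rfl
    have hlen : (p.takeUntil z hz).length + (p.dropUntil z hz).length = p.length := by
      rw [← Walk.length_append, p.take_spec hz]
    have := dist_le (p.takeUntil z hz)
    have := dist_le (p.dropUntil z hz)
    have := hG.pos_dist_of_ne fun h : z = y => hy h.symm
    have := hu y
    omega
  exact ⟨p.induce _ hsupp⟩

lemma Connected.exists_connected_induce_compl_singleton_not_adj [Finite V] (hG : G.Connected)
    (hc : ¬G.IsUniversal c) : ∃ w, c ≠ w ∧ ¬G.Adj c w ∧ (G.induce {w}ᶜ).Connected := by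
  have : Nonempty V := ⟨c⟩
  obtain ⟨w, hw⟩ := Finite.exists_max (G.dist c)
  obtain ⟨z, hcz, hnadj⟩ : ∃ z, c ≠ z ∧ ¬G.Adj c z := by simpa [IsUniversal] using hc
  have hz : 2 ≤ G.dist c w := by
    have := hG.pos_dist_of_ne hcz
    have : G.dist c z ≠ 1 := fun h => hnadj (dist_eq_one_iff_adj.mp h)
    have := hw z
    omega
  have hcw : c ≠ w := by rintro rfl; simp at hz
  refine ⟨w, hcw, fun h => ?_, hG.connected_induce_compl_singleton_of_forall_dist_le hw hcw⟩
  rw [dist_eq_one_iff_adj.mpr h] at hz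
  omega

lemma IsUniversal.exists_adj_of_ne_starGraph (hc : G.IsUniversal c)
    (h : G ≠ SimpleGraph.starGraph c) : ∃ x y, G.Adj x y ∧ x ≠ c ∧ y ≠ c := by
  contrapose! h
  ext x y
  rw [starGraph_adj]
  constructor
  · intro hxy
    exact ⟨G.ne_of_adj hxy, or_iff_not_imp_left.mpr (h x y hxy)⟩
  · rintro ⟨hxy, rfl | rfl⟩
    · exact hc hxy
    · exact (hc hxy.symm).symm

end SimpleGraph

section Pairs

variable {G : SimpleGraph V} {c u v w : V} [Fintype V]

lemma connForcingNumber_le_card_sub_two_of_adj_of_not_adj (hG : G.Connected) (hvu : G.Adj v u)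
    (hvw : ¬G.Adj v w) (hv : v ≠ w) (hconn : (G.induce {u, w}ᶜ).Connected) :
    connForcingNumber G ≤ Fintype.card V - 2 := by
  have : Nontrivial V := ⟨⟨v, u, G.ne_of_adj hvu⟩⟩
  obtain ⟨y, hy⟩ := hG.preconnected.exists_adj_of_nontrivial w
  have huw : u ≠ w := by rintro rfl; exact hvw hvu
  calc connForcingNumber G ≤ ({u, w}ᶜ : Set V).ncard :=
        connForcingNumber_le ⟨isForcingSet_compl_pair hvu hvw hv hy.symm, hconn⟩
    _ = Fintype.card V - 2 := by
        rw [Set.ncard_compl, Set.ncard_pair huw, Nat.card_eq_fintype_card]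

lemma connForcingNumber_le_card_sub_two_of_isUniversal (hc : G.IsUniversal c) (htop : G ≠ ⊤)
    (hstar : G ≠ SimpleGraph.starGraph c) : connForcingNumber G ≤ Fintype.card V - 2 := by
  obtain ⟨a, b, hab, hnadj⟩ := ne_top_iff_exists_not_adj.mp htop
  have hca : c ≠ a := by rintro rfl; exact hnadj (hc hab)
  have hconn : ∀ u w, c ≠ u → c ≠ w → (G.induce {u, w}ᶜ).Connected := fun u w hu hw =>
    Connected.of_isUniversal (v := ⟨c, by simp [hu, hw]⟩) fun _ hne =>
      hc fun h => hne (Subtype.ext h)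
  by_cases hz : ∃ z, c ≠ z ∧ G.Adj a z
  · obtain ⟨z, hcz, haz⟩ := hz
    have hcb : c ≠ b := by rintro rfl; exact hnadj (hc hca).symm
    exact connForcingNumber_le_card_sub_two_of_adj_of_not_adj (.of_isUniversal hc) haz hnadj hab
      (hconn z b hcz hcb)
  · push Not at hz
    obtain ⟨x, y, hxy, hxc, hyc⟩ := hc.exists_adj_of_ne_starGraph hstar
    have hya : y ≠ a := by rintro rfl; exact hz x (Ne.symm hxc) hxy.symm
    exact connForcingNumber_le_card_sub_two_of_adj_of_not_adj (.of_isUniversal hc) hxy.symm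
      (fun h => hz y (Ne.symm hyc) h.symm) hya (hconn x a (Ne.symm hxc) hca)

/-- Remove a non-cut vertex `u` far from an arbitrary vertex, then a non-cut vertex `w` of `G - u`
far from a neighbour `v` of `u`; then `v` is adjacent to `u` but not to `w`. -/
lemma connForcingNumber_le_card_sub_two_of_forall_not_isUniversal (hG : G.Connected)
    (h : ∀ c, ¬G.IsUniversal c) : connForcingNumber G ≤ Fintype.card V - 2 := by
  obtain ⟨r⟩ := hG.nonempty
  obtain ⟨u, hru, -, hu⟩ := hG.exists_connected_induce_compl_singleton_not_adj (h r)
  have : Nontrivial V := ⟨⟨r, u, hru⟩⟩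
  obtain ⟨v, huv⟩ := hG.preconnected.exists_adj_of_nontrivial u
  obtain ⟨z, hvz, hnadj⟩ : ∃ z, v ≠ z ∧ ¬G.Adj v z := by simpa [IsUniversal] using h v
  have hvH : ¬(G.induce {u}ᶜ).IsUniversal ⟨v, (G.ne_of_adj huv).symm⟩ := fun hvH =>
    hnadj (@hvH ⟨z, fun hzu => hnadj (hzu ▸ huv.symm)⟩ fun h => hvz (congrArg Subtype.val h))
  obtain ⟨⟨w, hwu⟩, hvw, hnadj', hw⟩ := hu.exists_connected_induce_compl_singleton_not_adj hvH
  have hset : Subtype.val '' ({⟨w, hwu⟩}ᶜ : Set ({u}ᶜ : Set V)) = {u, w}ᶜ := by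
    ext; simp [not_or]
  exact connForcingNumber_le_card_sub_two_of_adj_of_not_adj hG huv.symm hnadj'
    (fun h => hvw (Subtype.ext h)) (hset ▸ connected_induce_image_of_connected_induce_induce hw)

lemma connForcingNumber_le_card_sub_two (hG : G.Connected) (htop : G ≠ ⊤)
    (hstar : ∀ c, G ≠ SimpleGraph.starGraph c) : connForcingNumber G ≤ Fintype.card V - 2 := by
  by_cases hc : ∃ c, G.IsUniversal c
  · obtain ⟨c, hc⟩ := hc
    exact connForcingNumber_le_card_sub_two_of_isUniversal hc htop (hstar c)
  · push Not at hc
    exact connForcingNumber_le_card_sub_two_of_forall_not_isUniversal hG hc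

end Pairs

section SmallCases

variable {G : SimpleGraph V} [Fintype V]

lemma three_le_card_of_ne_top (hG : G.Connected) (htop : G ≠ ⊤) : 3 ≤ Fintype.card V := by
  obtain ⟨a, b, hab, hnadj⟩ := ne_top_iff_exists_not_adj.mp htop
  have : Nontrivial V := ⟨⟨a, b, hab⟩⟩
  obtain ⟨y, hy⟩ := hG.preconnected.exists_adj_of_nontrivial a
  exact Fintype.two_lt_card_iff.mpr
    ⟨a, b, y, hab, G.ne_of_adj hy, fun hby => hnadj (hby ▸ hy)⟩

/-- On three vertices a connected non-complete graph is a path `a - y - b`, and `{a}` forces it. -/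
lemma connForcingNumber_le_one_of_card_eq_three (hG : G.Connected) (h3 : Fintype.card V = 3)
    (htop : G ≠ ⊤) : connForcingNumber G ≤ 1 := by
  obtain ⟨a, b, hab, hnadj⟩ := ne_top_iff_exists_not_adj.mp htop
  have : Nontrivial V := ⟨⟨a, b, hab⟩⟩
  obtain ⟨y, hy⟩ := hG.preconnected.exists_adj_of_nontrivial a
  have hyb : y ≠ b := fun hyb => hnadj (hyb ▸ hy)
  have hset : ({a} : Set V) = {y, b}ᶜ := by
    refine Set.eq_of_subset_of_ncard_le (by simp [hab, G.ne_of_adj hy]) ?_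
    rw [Set.ncard_compl, Set.ncard_pair hyb, Nat.card_eq_fintype_card, h3, Set.ncard_singleton]
  have hconn : (G.induce {y, b}ᶜ).Connected := by
    rw [← hset, induce_singleton_eq_top]
    exact connected_top
  have := connForcingNumber_le_card_sub_two_of_adj_of_not_adj hG hy hnadj hab hconn
  omega

end SmallCases

section Isomorphisms

variable {W : Type*} {G : SimpleGraph V}

lemma eq_top_of_iso_top (f : G ≃g (⊤ : SimpleGraph W)) : G = ⊤ := by
  ext x y
  rw [← f.map_adj_iff, top_adj, top_adj, f.injective.ne_iff]

lemma eq_starGraph_of_iso_starGraph {r : W} (f : G ≃g SimpleGraph.starGraph r) :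
    G = SimpleGraph.starGraph (f.symm r) := by
  ext x y
  rw [← f.map_adj_iff, starGraph_adj, starGraph_adj, f.injective.ne_iff, f.eq_symm_apply,
    f.eq_symm_apply]

def starGraphIsoOfEquiv (e : V ≃ W) (r : V) :
    SimpleGraph.starGraph r ≃g SimpleGraph.starGraph (e r) where
  toEquiv := e
  map_rel_iff' := by simp [e.injective.ne_iff]

lemma starGraph_eq_starGraph_zero {n : ℕ} (hn : 0 < n) :
    _root_.starGraph n = SimpleGraph.starGraph ⟨0, hn⟩ := by
  ext x y
  simp [_root_.starGraph, Fin.ext_iff]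

variable [Fintype V] {n : ℕ}

lemma nonempty_iso_top_iff (hcard : Fintype.card V = n) :
    Nonempty (G ≃g (⊤ : SimpleGraph (Fin n))) ↔ G = ⊤ := by
  refine ⟨fun ⟨f⟩ => eq_top_of_iso_top f, ?_⟩
  rintro rfl
  exact ⟨Iso.completeGraph (Fintype.equivFinOfCardEq hcard)⟩

lemma nonempty_iso_starGraph_iff (hcard : Fintype.card V = n) (hn : 0 < n) :
    Nonempty (G ≃g _root_.starGraph n) ↔ ∃ c, G = SimpleGraph.starGraph c := by
  rw [starGraph_eq_starGraph_zero hn]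
  refine ⟨fun ⟨f⟩ => ⟨_, eq_starGraph_of_iso_starGraph f⟩, ?_⟩
  rintro ⟨c, rfl⟩
  let e₀ := Fintype.equivFinOfCardEq hcard
  let e := e₀.trans (Equiv.swap (e₀ c) ⟨0, hn⟩)
  have hc : e c = ⟨0, hn⟩ := Equiv.swap_apply_left _ _
  exact ⟨hc ▸ starGraphIsoOfEquiv e c⟩

end Isomorphisms

/-- Let `G` be a connected graph of order `n ≥ 2`. Then `F_c(G) = n - 1` if and
only if `G` is a complete graph `K_n` (with `n ≥ 2`) or a star `K_{1,n-1}` with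
`n ≥ 4`. -/
theorem connForcingNumber_eq_card_sub_one_iff {V : Type*} [Fintype V]
    (G : SimpleGraph V) (hG : G.Connected) (n : ℕ) (hcard : Fintype.card V = n)
    (hn : 2 ≤ n) :
    connForcingNumber G = n - 1 ↔
      (Nonempty (G ≃g (⊤ : SimpleGraph (Fin n))) ∨
        (4 ≤ n ∧ Nonempty (G ≃g _root_.starGraph n))) := by
  rw [nonempty_iso_top_iff hcard, nonempty_iso_starGraph_iff hcard (by omega)]
  subst hcard
  have : Nontrivial V := Fintype.one_lt_card_iff_nontrivial.mp hn
  constructor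
  · intro hF
    by_contra! h
    obtain ⟨htop, hstar⟩ := h
    rcases (three_le_card_of_ne_top hG htop).eq_or_lt with h3 | h4
    · have := connForcingNumber_le_one_of_card_eq_three hG h3.symm htop
      omega
    · have := connForcingNumber_le_card_sub_two hG htop (hstar h4)
      omega
  · rintro (rfl | ⟨h4, c, rfl⟩)
    · exact connForcingNumber_top
    · exact connForcingNumber_starGraph h4
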